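/- arXiv:2312.11656 — 2 statements merged into one kernel-verified Lean document; each statement's English description precedes it below -/
import Mathlib

section
/- Let m ≥ 1, let K ⊆ ℝ^m be a nonempty compact convex set with 0 ∉ K, and let C = {t • x : t ≥ 0, x ∈ K} be the cone over K. Assume that every nonzero vector y ∈ C can be written in exactly one way as y = t • x with t > 0 and x ∈ K. If f : ℝ^m → ℝ^m is a linear map such that f(C) ⊆ C and f(y) ≠ 0 for every nonzero y ∈ C, then there exist x ∈ K and a real number λ > 0 with f(x) = λ • x. -/
open Polynomial Filter Finset Topology

noncomputable section

/-- lower bound for descending factorial -/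
lemma descFact_lower (n : ℕ) : ∀ k : ℕ, (n + 1 - k) ^ k ≤ n.descFactorial k := by
  intro k
  induction k with
  | zero => simp
  | succ k ih =>
    rw [Nat.descFactorial_succ]
    have h1 : n + 1 - (k + 1) = n - k := by omega
    rw [h1, pow_succ, mul_comm]
    refine Nat.mul_le_mul_left _ ?_
    calc (n - k) ^ k ≤ (n + 1 - k) ^ k := Nat.pow_le_pow_left (by omega) k
    _ ≤ n.descFactorial k := ih

/-- lower bound for binomial coefficients, ℕ version -/
lemma choose_lower_nat {k n : ℕ} (h : 2 * k ≤ n) :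
    (n + 1) ^ k ≤ 2 ^ k * (k.factorial * n.choose k) := by
  calc (n + 1) ^ k ≤ (2 * (n + 1 - k)) ^ k := Nat.pow_le_pow_left (by omega) k
  _ = 2 ^ k * (n + 1 - k) ^ k := by rw [mul_pow]
  _ ≤ 2 ^ k * n.descFactorial k := Nat.mul_le_mul_left _ (descFact_lower n k)
  _ = 2 ^ k * (k.factorial * n.choose k) := by rw [Nat.descFactorial_eq_factorial_mul_choose]

/-- upper bound for binomial coefficients, ℕ version -/
lemma choose_upper_nat {i k n : ℕ} (h : i ≤ k) : n.choose i ≤ (n + 1) ^ k :=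
  calc n.choose i ≤ n.descFactorial i := Nat.choose_le_descFactorial n i
  _ ≤ n ^ i := Nat.descFactorial_le_pow n i
  _ ≤ (n + 1) ^ i := Nat.pow_le_pow_left (Nat.le_succ n) i
  _ ≤ (n + 1) ^ k := Nat.pow_le_pow_right (by omega) h

variable {V : Type*} [NormedAddCommGroup V] [NormedSpace ℂ V]

/-- Two-sided asymptotics `‖gⁿ u‖ ≍ ρⁿ (n+1)^k`. -/
def GoodAsymp (g : V →ₗ[ℂ] V) (u : V) (ρ : ℝ) (k : ℕ) : Prop :=
  ∃ c C : ℝ, 0 < c ∧ ∃ n₀ : ℕ, ∀ n, n₀ ≤ n →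
    c * (ρ ^ n * ((n : ℝ) + 1) ^ k) ≤ ‖(g ^ n) u‖ ∧
    ‖(g ^ n) u‖ ≤ C * (ρ ^ n * ((n : ℝ) + 1) ^ k)

lemma evzero_mono (g : V →ₗ[ℂ] V) {u : V} {N : ℕ} (h : (g ^ N) u = 0) :
    ∀ n, N ≤ n → (g ^ n) u = 0 := by
  intro n hn
  have h2 : (g ^ n) u = (g ^ (n - N)) ((g ^ N) u) := by
    rw [← Module.End.mul_apply, ← pow_add]
    congr 2
    omega
  rw [h2, h, map_zero]

/-- A single generalized eigenvector with nonzero eigenvalue has clean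
norm asymptotics along iterates. -/
lemma single_block (g : V →ₗ[ℂ] V) {lam : ℂ} (hlam : lam ≠ 0) (a : ℕ) {u : V} (hu : u ≠ 0)
    (hann : ((g - algebraMap ℂ (Module.End ℂ V) lam) ^ a) u = 0) :
    ∃ k : ℕ, GoodAsymp g u ‖lam‖ k := by
  classical
  set b : Module.End ℂ V := algebraMap ℂ (Module.End ℂ V) lam with hb
  set h : Module.End ℂ V := g - b with hh
  set k := Nat.findGreatest (fun j => (h ^ j) u ≠ 0) a with hkdef
  have hP0 : (h ^ 0) u ≠ 0 := by simpa using hu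
  have hk : (h ^ k) u ≠ 0 := by
    rw [hkdef]
    exact Nat.findGreatest_spec (P := fun j => (h ^ j) u ≠ 0) (Nat.zero_le a) hP0
  have htop : ∀ j, k < j → (h ^ j) u = 0 := by
    intro j hj
    rcases le_or_gt j a with hja | haj
    · by_contra hne
      have h2 := Nat.le_findGreatest (P := fun j => (h ^ j) u ≠ 0) hja hne
      rw [← hkdef] at h2
      omega
    · exact evzero_mono h hann j haj.le
  have hlamn : (0:ℝ) < ‖lam‖ := norm_pos_iff.2 hlam
  -- binomial expansion
  have hcomm : Commute h b := (Algebra.commutes lam h).symm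
  have hexp : ∀ n : ℕ, k ≤ n →
      (g ^ n) u = ∑ i ∈ range (k + 1), (((n.choose i : ℂ)) * lam ^ (n - i)) • ((h ^ i) u) := by
    intro n hn
    have hg : g = h + b := by rw [hh]; abel
    have e1 : (g ^ n) u = ∑ i ∈ range (n + 1), (((n.choose i : ℂ)) * lam ^ (n - i)) • ((h ^ i) u) := by
      rw [hg, hcomm.add_pow]
      rw [LinearMap.sum_apply]
      refine Finset.sum_congr rfl fun i hi => ?_
      rw [Module.End.mul_apply, Module.End.mul_apply, Module.End.natCast_apply]
      have hbpow : (b ^ (n - i)) = algebraMap ℂ (Module.End ℂ V) (lam ^ (n - i)) := by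
        rw [hb, map_pow]
      rw [hbpow, Module.algebraMap_end_apply, map_smul, map_nsmul]
      rw [mul_smul, Nat.cast_smul_eq_nsmul]
      exact smul_comm _ _ _
    rw [e1]
    symm
    apply Finset.sum_subset
    · intro i hi
      rw [Finset.mem_range] at *
      omega
    · intro i hi hik
      rw [Finset.mem_range] at hi hik
      rw [htop i (by omega), smul_zero]
  -- constants
  set D : ℝ := ∑ i ∈ range k, ‖lam‖ ^ (0:ℕ) * (‖lam‖ ^ i)⁻¹ * ‖(h ^ i) u‖ with hD
  set Cup : ℝ := ∑ i ∈ range (k + 1), (‖lam‖ ^ i)⁻¹ * ‖(h ^ i) u‖ with hCup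
  set γ : ℝ := ‖(h ^ k) u‖ * (‖lam‖ ^ k)⁻¹ / (2 ^ k * k.factorial) with hγ
  have hγpos : 0 < γ := by
    rw [hγ]
    have : 0 < ‖(h ^ k) u‖ := norm_pos_iff.2 hk
    positivity
  have hDnn : 0 ≤ D := by
    rw [hD]; apply Finset.sum_nonneg; intro i _; positivity
  -- choose n₁ with D / (n+1) ≤ γ/2 for n ≥ n₁
  obtain ⟨n₁, hn₁⟩ := exists_nat_gt (2 * D / γ)
  refine ⟨k, γ / 2, Cup, by positivity, max (max (2 * k) k) n₁, fun n hn => ?_⟩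
  have hnk : k ≤ n := le_trans (le_trans (le_max_right _ _) (le_max_left _ _)) hn
  have hn2k : 2 * k ≤ n := le_trans (le_trans (le_max_left _ _) (le_max_left _ _)) hn
  have hnn₁ : n₁ ≤ n := le_trans (le_max_right _ _) hn
  have hnpos : (0:ℝ) < (n : ℝ) + 1 := by positivity
  have hterm_ub : ∀ i ∈ range (k + 1),
      ‖(((n.choose i : ℂ)) * lam ^ (n - i)) • ((h ^ i) u)‖ ≤
        ((n:ℝ) + 1) ^ k * ‖lam‖ ^ n * ((‖lam‖ ^ i)⁻¹ * ‖(h ^ i) u‖) := by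
    intro i hi
    rw [Finset.mem_range] at hi
    have hik : i ≤ k := by omega
    rw [norm_smul, norm_mul, norm_pow, Complex.norm_natCast]
    have h1 : (n.choose i : ℝ) ≤ ((n:ℝ) + 1) ^ k := by
      have := choose_upper_nat (n := n) hik
      exact_mod_cast this
    have h2 : ‖lam‖ ^ (n - i) = ‖lam‖ ^ n * (‖lam‖ ^ i)⁻¹ := by
      exact pow_sub₀ _ (ne_of_gt hlamn) (by omega)
    rw [h2]
    have h3 : (0:ℝ) ≤ ‖lam‖ ^ n * (‖lam‖ ^ i)⁻¹ * ‖(h ^ i) u‖ := by positivity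
    calc (n.choose i : ℝ) * (‖lam‖ ^ n * (‖lam‖ ^ i)⁻¹) * ‖(h ^ i) u‖
        ≤ ((n:ℝ) + 1) ^ k * (‖lam‖ ^ n * (‖lam‖ ^ i)⁻¹) * ‖(h ^ i) u‖ := by
          apply mul_le_mul_of_nonneg_right (mul_le_mul_of_nonneg_right h1 (by positivity)) (by positivity)
    _ = ((n:ℝ) + 1) ^ k * ‖lam‖ ^ n * ((‖lam‖ ^ i)⁻¹ * ‖(h ^ i) u‖) := by ring
  constructor
  · -- lower bound
    -- top term
    have htopterm : (((n:ℝ) + 1) ^ k / (2 ^ k * k.factorial)) * (‖lam‖ ^ n * (‖lam‖ ^ k)⁻¹) * ‖(h ^ k) u‖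
        ≤ ‖(((n.choose k : ℂ)) * lam ^ (n - k)) • ((h ^ k) u)‖ := by
      rw [norm_smul, norm_mul, norm_pow, Complex.norm_natCast]
      have h1 : ((n:ℝ) + 1) ^ k / (2 ^ k * k.factorial) ≤ (n.choose k : ℝ) := by
        rw [div_le_iff₀ (by positivity)]
        have := choose_lower_nat hn2k
        have h2 : ((n + 1 : ℕ) : ℝ) ^ k ≤ ((2 ^ k * (k.factorial * n.choose k) : ℕ) : ℝ) := by
          exact_mod_cast this
        push_cast at h2
        nlinarith [h2]
      have h2 : ‖lam‖ ^ (n - k) = ‖lam‖ ^ n * (‖lam‖ ^ k)⁻¹ := by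
        exact pow_sub₀ _ (ne_of_gt hlamn) (by omega)
      rw [h2]
      apply mul_le_mul_of_nonneg_right (mul_le_mul_of_nonneg_right h1 (by positivity)) (norm_nonneg _)
    -- remainder
    have hrem : ‖∑ i ∈ range k, (((n.choose i : ℂ)) * lam ^ (n - i)) • ((h ^ i) u)‖
        ≤ (((n:ℝ) + 1) ^ k / ((n:ℝ) + 1)) * ‖lam‖ ^ n * D := by
      calc ‖∑ i ∈ range k, (((n.choose i : ℂ)) * lam ^ (n - i)) • ((h ^ i) u)‖
          ≤ ∑ i ∈ range k, ‖(((n.choose i : ℂ)) * lam ^ (n - i)) • ((h ^ i) u)‖ :=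
            norm_sum_le _ _
      _ ≤ ∑ i ∈ range k, (((n:ℝ) + 1) ^ k / ((n:ℝ) + 1)) * ‖lam‖ ^ n * ((‖lam‖ ^ i)⁻¹ * ‖(h ^ i) u‖) := by
          refine Finset.sum_le_sum fun i hi => ?_
          rw [Finset.mem_range] at hi
          rw [norm_smul, norm_mul, norm_pow, Complex.norm_natCast]
          have h1 : (n.choose i : ℝ) ≤ ((n:ℝ) + 1) ^ k / ((n:ℝ) + 1) := by
            rw [le_div_iff₀ hnpos]
            have h2 : n.choose i * (n + 1) ≤ (n + 1) ^ k := by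
              calc n.choose i * (n + 1) ≤ (n+1) ^ i * (n+1) ^ 1 := by
                    apply Nat.mul_le_mul (choose_upper_nat le_rfl) (le_of_eq (pow_one _).symm)
              _ = (n+1) ^ (i+1) := by rw [← pow_add]
              _ ≤ (n+1) ^ k := Nat.pow_le_pow_right (by omega) (by omega)
            exact_mod_cast h2
          have h2 : ‖lam‖ ^ (n - i) = ‖lam‖ ^ n * (‖lam‖ ^ i)⁻¹ :=
            pow_sub₀ _ (ne_of_gt hlamn) (by omega)
          rw [h2]
          calc (n.choose i : ℝ) * (‖lam‖ ^ n * (‖lam‖ ^ i)⁻¹) * ‖(h ^ i) u‖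
              ≤ (((n:ℝ) + 1) ^ k / ((n:ℝ) + 1)) * (‖lam‖ ^ n * (‖lam‖ ^ i)⁻¹) * ‖(h ^ i) u‖ := by
                apply mul_le_mul_of_nonneg_right (mul_le_mul_of_nonneg_right h1 (by positivity)) (by positivity)
          _ = (((n:ℝ) + 1) ^ k / ((n:ℝ) + 1)) * ‖lam‖ ^ n * ((‖lam‖ ^ i)⁻¹ * ‖(h ^ i) u‖) := by ring
      _ = (((n:ℝ) + 1) ^ k / ((n:ℝ) + 1)) * ‖lam‖ ^ n * D := by
          rw [hD, Finset.mul_sum]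
          refine Finset.sum_congr rfl fun i _ => by ring
    -- split off top term
    have hsplit : (g ^ n) u = (((n.choose k : ℂ)) * lam ^ (n - k)) • ((h ^ k) u)
        + ∑ i ∈ range k, (((n.choose i : ℂ)) * lam ^ (n - i)) • ((h ^ i) u) := by
      rw [hexp n hnk, Finset.sum_range_succ]
      ring_nf
      rw [add_comm]
    have h5 : ‖(((n.choose k : ℂ)) * lam ^ (n - k)) • ((h ^ k) u)‖
        - ‖∑ i ∈ range k, (((n.choose i : ℂ)) * lam ^ (n - i)) • ((h ^ i) u)‖ ≤ ‖(g ^ n) u‖ := by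
      set X := (((n.choose k : ℂ)) * lam ^ (n - k)) • ((h ^ k) u)
      set Y := ∑ i ∈ range k, (((n.choose i : ℂ)) * lam ^ (n - i)) • ((h ^ i) u)
      have h5' := norm_add_le (X + Y) (-Y)
      simp only [add_neg_cancel_right, norm_neg] at h5'
      rw [hsplit]
      linarith
    have hDn : D / ((n:ℝ) + 1) ≤ γ / 2 := by
      rw [div_le_iff₀ hnpos]
      have hγ2 : 0 < γ / 2 := by positivity
      have h6 : 2 * D / γ < (n:ℝ) := lt_of_lt_of_le hn₁ (by exact_mod_cast hnn₁)
      rw [div_lt_iff₀ hγpos] at h6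
      nlinarith
    have hfin : γ / 2 * (‖lam‖ ^ n * ((n:ℝ) + 1) ^ k) ≤
        γ * (‖lam‖ ^ n * ((n:ℝ) + 1) ^ k) - (((n:ℝ) + 1) ^ k / ((n:ℝ) + 1)) * ‖lam‖ ^ n * D := by
      have h7 : (((n:ℝ) + 1) ^ k / ((n:ℝ) + 1)) * ‖lam‖ ^ n * D
          = (D / ((n:ℝ)+1)) * (‖lam‖ ^ n * ((n:ℝ) + 1) ^ k) := by ring
      rw [h7]
      have h8 : 0 < ‖lam‖ ^ n * ((n:ℝ) + 1) ^ k := by positivity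
      nlinarith [hDn, h8]
    calc γ / 2 * (‖lam‖ ^ n * ((n:ℝ) + 1) ^ k)
        ≤ γ * (‖lam‖ ^ n * ((n:ℝ) + 1) ^ k) - (((n:ℝ) + 1) ^ k / ((n:ℝ) + 1)) * ‖lam‖ ^ n * D := hfin
    _ ≤ ‖(((n.choose k : ℂ)) * lam ^ (n - k)) • ((h ^ k) u)‖
        - ‖∑ i ∈ range k, (((n.choose i : ℂ)) * lam ^ (n - i)) • ((h ^ i) u)‖ := by
        have h9 : γ * (‖lam‖ ^ n * ((n:ℝ) + 1) ^ k)
            = (((n:ℝ) + 1) ^ k / (2 ^ k * k.factorial)) * (‖lam‖ ^ n * (‖lam‖ ^ k)⁻¹) * ‖(h ^ k) u‖ := by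
          rw [hγ]; ring
        rw [h9]
        exact sub_le_sub htopterm hrem
    _ ≤ ‖(g ^ n) u‖ := h5
  · -- upper bound
    calc ‖(g ^ n) u‖ ≤ ∑ i ∈ range (k+1), ‖(((n.choose i : ℂ)) * lam ^ (n - i)) • ((h ^ i) u)‖ := by
          rw [hexp n hnk]; exact norm_sum_le _ _
    _ ≤ ∑ i ∈ range (k+1), ((n:ℝ) + 1) ^ k * ‖lam‖ ^ n * ((‖lam‖ ^ i)⁻¹ * ‖(h ^ i) u‖) :=
        Finset.sum_le_sum hterm_ub
    _ = Cup * (‖lam‖ ^ n * ((n:ℝ) + 1) ^ k) := by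
        rw [hCup, Finset.sum_mul]
        refine Finset.sum_congr rfl fun i _ => by ring

lemma ratio_bound {ρ₁ ρ₂ : ℝ} (hρ₁ : 0 < ρ₁) (hρ₂ : 0 < ρ₂) {k₁ k₂ : ℕ}
    (hlex : ρ₂ < ρ₁ ∨ (ρ₂ = ρ₁ ∧ k₂ ≤ k₁)) :
    ∃ B : ℝ, ∀ n : ℕ, ρ₂ ^ n * ((n:ℝ) + 1) ^ k₂ ≤ B * (ρ₁ ^ n * ((n:ℝ) + 1) ^ k₁) := by
  rcases hlex with hlt | ⟨heq, hk⟩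
  · set r := ρ₂ / ρ₁ with hrdef
    have hr0 : 0 < r := by positivity
    have hr1 : r < 1 := (div_lt_one hρ₁).2 hlt
    have htend : Tendsto (fun n : ℕ => ((n:ℝ) + 1) ^ k₂ * r ^ n) atTop (𝓝 0) := by
      have h0 := tendsto_pow_const_mul_const_pow_of_lt_one k₂ hr0.le hr1
      have h1 : Tendsto (fun n : ℕ => (((n + 1 : ℕ)):ℝ) ^ k₂ * r ^ (n + 1)) atTop (𝓝 0) :=
        h0.comp (tendsto_add_atTop_nat 1)
      have h2 := h1.const_mul r⁻¹
      rw [mul_zero] at h2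
      apply h2.congr
      intro n
      push_cast
      field_simp
      ring
    obtain ⟨B, hB⟩ := htend.bddAbove_range
    refine ⟨B, fun n => ?_⟩
    have h3 : ((n:ℝ) + 1) ^ k₂ * r ^ n ≤ B := hB ⟨n, rfl⟩
    have hBnn : 0 ≤ B := le_trans (by positivity) h3
    have h4 : ρ₂ ^ n * ((n:ℝ) + 1) ^ k₂ = (((n:ℝ) + 1) ^ k₂ * r ^ n) * ρ₁ ^ n := by
      have hρ₁n : ρ₁ ^ n ≠ 0 := by positivity
      rw [hrdef, div_pow]
      field_simp
    rw [h4]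
    calc (((n:ℝ) + 1) ^ k₂ * r ^ n) * ρ₁ ^ n ≤ B * ρ₁ ^ n :=
          mul_le_mul_of_nonneg_right h3 (by positivity)
    _ ≤ B * (ρ₁ ^ n * ((n:ℝ) + 1) ^ k₁) := by
        have h5 : (1:ℝ) ≤ ((n:ℝ) + 1) ^ k₁ := one_le_pow₀ (by linarith [Nat.cast_nonneg (α := ℝ) n])
        have h6 : 0 ≤ B * ρ₁ ^ n := mul_nonneg hBnn (by positivity)
        calc B * ρ₁ ^ n = (B * ρ₁ ^ n) * 1 := by ring
        _ ≤ (B * ρ₁ ^ n) * (((n:ℝ) + 1) ^ k₁) := mul_le_mul_of_nonneg_left h5 h6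
        _ = B * (ρ₁ ^ n * ((n:ℝ) + 1) ^ k₁) := by ring
  · subst heq
    refine ⟨1, fun n => ?_⟩
    rw [one_mul]
    exact mul_le_mul_of_nonneg_left
      (pow_le_pow_right₀ (by linarith [Nat.cast_nonneg (α := ℝ) n]) hk) (by positivity)

lemma combine_evzero (g : V →ₗ[ℂ] V) {u u₁ u₂ : V} (hu : u = u₁ + u₂)
    (h₂ : ∃ N, (g ^ N) u₂ = 0) {ρ₁ : ℝ} {k₁ : ℕ} (hG₁ : GoodAsymp g u₁ ρ₁ k₁) :
    GoodAsymp g u ρ₁ k₁ := by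
  obtain ⟨c, C, hc, n₁, hb⟩ := hG₁
  obtain ⟨N, hN⟩ := h₂
  refine ⟨c, C, hc, max n₁ N, fun n hn => ?_⟩
  have h1 : (g ^ n) u = (g ^ n) u₁ := by
    rw [hu, map_add, evzero_mono g hN n (le_trans (le_max_right _ _) hn), add_zero]
  rw [h1]
  exact hb n (le_trans (le_max_left _ _) hn)

lemma combine_good (g : V →ₗ[ℂ] V) {u u₁ u₂ : V} (hu : u = u₁ + u₂)
    (T : V →ₗ[ℂ] V) (hT : ∀ n : ℕ, T ((g ^ n) u) = (g ^ n) u₁)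
    {Cop : ℝ} (hCop : 0 < Cop) (hTb : ∀ y, ‖T y‖ ≤ Cop * ‖y‖)
    {ρ₁ ρ₂ : ℝ} {k₁ k₂ : ℕ} (hρ₁ : 0 < ρ₁) (hρ₂ : 0 < ρ₂)
    (hG₁ : GoodAsymp g u₁ ρ₁ k₁) (hG₂ : GoodAsymp g u₂ ρ₂ k₂)
    (hlex : ρ₂ < ρ₁ ∨ (ρ₂ = ρ₁ ∧ k₂ ≤ k₁)) : GoodAsymp g u ρ₁ k₁ := by
  obtain ⟨c₁, C₁, hc₁, n₁, hb₁⟩ := hG₁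
  obtain ⟨c₂, C₂, hc₂, n₂, hb₂⟩ := hG₂
  obtain ⟨B, hB⟩ := ratio_bound hρ₁ hρ₂ hlex
  have hC₂pos : 0 < C₂ := by
    have hd : (0:ℝ) < ρ₂ ^ n₂ * ((n₂:ℝ) + 1) ^ k₂ := by positivity
    have h1 := (hb₂ n₂ le_rfl).1
    have h2 := (hb₂ n₂ le_rfl).2
    nlinarith
  have hB0 : 0 ≤ B := by
    have h := hB 0
    norm_num at h
    linarith
  refine ⟨c₁ / Cop, C₁ + C₂ * B, by positivity, max n₁ n₂, fun n hn => ?_⟩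
  have hd₁ : (0:ℝ) < ρ₁ ^ n * ((n:ℝ) + 1) ^ k₁ := by positivity
  constructor
  · have h1 := (hb₁ n (le_trans (le_max_left _ _) hn)).1
    have h2 : ‖(g ^ n) u₁‖ ≤ Cop * ‖(g ^ n) u‖ := by rw [← hT n]; exact hTb _
    rw [div_mul_eq_mul_div, div_le_iff₀ hCop]
    calc c₁ * (ρ₁ ^ n * ((n:ℝ) + 1) ^ k₁) ≤ ‖(g ^ n) u₁‖ := h1
    _ ≤ Cop * ‖(g ^ n) u‖ := h2
    _ = ‖(g ^ n) u‖ * Cop := by ring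
  · have h1 := (hb₁ n (le_trans (le_max_left _ _) hn)).2
    have h2 := (hb₂ n (le_trans (le_max_right _ _) hn)).2
    calc ‖(g ^ n) u‖ ≤ ‖(g ^ n) u₁‖ + ‖(g ^ n) u₂‖ := by
          rw [hu, map_add]; exact norm_add_le _ _
    _ ≤ C₁ * (ρ₁ ^ n * ((n:ℝ) + 1) ^ k₁) + C₂ * (ρ₂ ^ n * ((n:ℝ) + 1) ^ k₂) := add_le_add h1 h2
    _ ≤ C₁ * (ρ₁ ^ n * ((n:ℝ) + 1) ^ k₁) + C₂ * (B * (ρ₁ ^ n * ((n:ℝ) + 1) ^ k₁)) := by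
        have := hB n
        nlinarith
    _ = (C₁ + C₂ * B) * (ρ₁ ^ n * ((n:ℝ) + 1) ^ k₁) := by ring

lemma exists_opbound [FiniteDimensional ℂ V] (T : V →ₗ[ℂ] V) :
    ∃ Cb : ℝ, 0 < Cb ∧ ∀ y, ‖T y‖ ≤ Cb * ‖y‖ := by
  set Tc := LinearMap.toContinuousLinearMap T with hTc
  refine ⟨‖Tc‖ + 1, by positivity, fun y => ?_⟩
  have h1 : T y = Tc y := rfl
  rw [h1]
  calc ‖Tc y‖ ≤ ‖Tc‖ * ‖y‖ := Tc.le_opNorm y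
  _ ≤ (‖Tc‖ + 1) * ‖y‖ := by nlinarith [norm_nonneg y, norm_nonneg Tc]

lemma spectral_asymp [FiniteDimensional ℂ V] (g : V →ₗ[ℂ] V) :
    ∀ d : ℕ, ∀ p : ℂ[X], p.Monic → p.natDegree ≤ d → ∀ u : V, (Polynomial.aeval g p) u = 0 →
    (∃ N, (g ^ N) u = 0) ∨ ∃ ρ : ℝ, 0 < ρ ∧ ∃ k : ℕ, GoodAsymp g u ρ k := by
  intro d
  induction d with
  | zero =>
    intro p hp hdeg u hann
    have hp1 : p = 1 := hp.natDegree_eq_zero.1 (Nat.le_zero.1 hdeg)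
    left
    refine ⟨0, ?_⟩
    rw [hp1] at hann
    simpa using hann
  | succ d ih =>
    intro p hp hdeg u hann
    by_cases hd0 : p.natDegree = 0
    · left
      refine ⟨0, ?_⟩
      rw [hp.natDegree_eq_zero.1 hd0] at hann
      simpa using hann
    have hne : p.degree ≠ 0 := fun h =>
      hd0 (Polynomial.natDegree_eq_zero_iff_degree_le_zero.2 (le_of_eq h))
    obtain ⟨lam, hroot⟩ := IsAlgClosed.exists_root p hne
    have hp0 : p ≠ 0 := hp.ne_zero
    set a := Polynomial.rootMultiplicity lam p with ha
    have hapos : 0 < a := (Polynomial.rootMultiplicity_pos hp0).2 hroot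
    set q := p /ₘ (X - C lam) ^ a with hq
    have hpq : (X - C lam) ^ a * q = p := Polynomial.pow_mul_divByMonic_rootMultiplicity_eq p lam
    have hqlam : q.eval lam ≠ 0 := Polynomial.eval_divByMonic_pow_rootMultiplicity_ne_zero lam hp0
    have hmq : q.Monic := ((Polynomial.monic_X_sub_C lam).pow a).of_mul_monic_left
      (by rw [hpq]; exact hp)
    have hdq : q.natDegree ≤ d := by
      have h1 := Polynomial.natDegree_mul
        (p := (X - C lam) ^ a) (q := q) (((Polynomial.monic_X_sub_C lam).pow a).ne_zero) hmq.ne_zero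
      rw [hpq, Polynomial.natDegree_pow, Polynomial.natDegree_X_sub_C, mul_one] at h1
      omega
    have hcop : IsCoprime ((X - C lam) ^ a) q :=
      IsCoprime.pow_left ((Polynomial.prime_X_sub_C lam).coprime_iff_not_dvd.2
        (fun hdvd => hqlam (Polynomial.dvd_iff_isRoot.1 hdvd)))
    obtain ⟨α, β, hab⟩ := hcop
    set u₁ := (Polynomial.aeval g (β * q)) u with hu₁
    set u₂ := (Polynomial.aeval g (α * (X - C lam) ^ a)) u with hu₂
    have hsum : u = u₁ + u₂ := by
      have h1 : β * q + α * (X - C lam) ^ a = 1 := by rw [add_comm]; exact hab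
      have h2 : (Polynomial.aeval g (β * q + α * (X - C lam) ^ a)) u = u := by
        rw [h1]; simp
      rw [← h2, map_add, LinearMap.add_apply]
    have hcommP : ∀ (P : ℂ[X]) (n : ℕ) (y : V),
        (Polynomial.aeval g P) ((g ^ n) y) = (g ^ n) ((Polynomial.aeval g P) y) := by
      intro P n y
      have h1 : (Polynomial.aeval g P) * (g ^ n) = (g ^ n) * (Polynomial.aeval g P) := by
        rw [show (g ^ n : Module.End ℂ V) = Polynomial.aeval g (X ^ n) from
          (Polynomial.aeval_X_pow (R := ℂ) g).symm, ← map_mul, ← map_mul, mul_comm P (X ^ n)]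
      calc (Polynomial.aeval g P) ((g ^ n) y) = ((Polynomial.aeval g P) * (g ^ n)) y := rfl
      _ = ((g ^ n) * (Polynomial.aeval g P)) y := by rw [h1]
      _ = (g ^ n) ((Polynomial.aeval g P) y) := rfl
    have hgn1 : ∀ n : ℕ, (Polynomial.aeval g (β * q)) ((g ^ n) u) = (g ^ n) u₁ :=
      fun n => by rw [hcommP, ← hu₁]
    have hgn2 : ∀ n : ℕ, (Polynomial.aeval g (α * (X - C lam) ^ a)) ((g ^ n) u) = (g ^ n) u₂ :=
      fun n => by rw [hcommP, ← hu₂]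
    have hann1 : ((g - algebraMap ℂ (Module.End ℂ V) lam) ^ a) u₁ = 0 := by
      have h1 : g - algebraMap ℂ (Module.End ℂ V) lam = Polynomial.aeval g (X - C lam) := by
        rw [map_sub, Polynomial.aeval_X, Polynomial.aeval_C]
      rw [h1, ← map_pow, hu₁, ← Module.End.mul_apply, ← map_mul]
      have h2 : (X - C lam) ^ a * (β * q) = β * p := by rw [← hpq]; ring
      rw [h2, map_mul, Module.End.mul_apply, hann, map_zero]
    have hann2 : (Polynomial.aeval g q) u₂ = 0 := by
      rw [hu₂, ← Module.End.mul_apply, ← map_mul]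
      have h2 : q * (α * (X - C lam) ^ a) = α * p := by rw [← hpq]; ring
      rw [h2, map_mul, Module.End.mul_apply, hann, map_zero]
    have R2 := ih q hmq hdq u₂ hann2
    have R1 : (∃ N, (g ^ N) u₁ = 0) ∨ (lam ≠ 0 ∧ ∃ k, GoodAsymp g u₁ ‖lam‖ k) := by
      by_cases h10 : u₁ = 0
      · left; exact ⟨0, by simp [h10]⟩
      by_cases hlam0 : lam = 0
      · left
        refine ⟨a, ?_⟩
        have h3 := hann1
        rw [hlam0, map_zero, sub_zero] at h3
        exact h3
      · exact Or.inr ⟨hlam0, single_block g hlam0 a h10 hann1⟩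
    rcases R1 with ⟨N₁, hN₁⟩ | ⟨hlam0, k₁, hG₁⟩
    · rcases R2 with ⟨N₂, hN₂⟩ | ⟨ρ₂, hρ₂, k₂, hG₂⟩
      · left
        refine ⟨max N₁ N₂, ?_⟩
        rw [hsum, map_add, evzero_mono g hN₁ _ (le_max_left _ _),
          evzero_mono g hN₂ _ (le_max_right _ _), add_zero]
      · right
        exact ⟨ρ₂, hρ₂, k₂, combine_evzero g (by rw [hsum, add_comm]) ⟨N₁, hN₁⟩ hG₂⟩
    · have hlamn : (0:ℝ) < ‖lam‖ := norm_pos_iff.2 hlam0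
      rcases R2 with ⟨N₂, hN₂⟩ | ⟨ρ₂, hρ₂, k₂, hG₂⟩
      · right
        exact ⟨‖lam‖, hlamn, k₁, combine_evzero g hsum ⟨N₂, hN₂⟩ hG₁⟩
      · obtain ⟨Cop₁, hCop₁, hTb₁⟩ := exists_opbound (Polynomial.aeval g (β * q))
        obtain ⟨Cop₂, hCop₂, hTb₂⟩ := exists_opbound (Polynomial.aeval g (α * (X - C lam) ^ a))
        rcases lt_trichotomy ρ₂ ‖lam‖ with hcmp | hcmp | hcmp
        · exact Or.inr ⟨‖lam‖, hlamn, k₁,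
            combine_good g hsum _ hgn1 hCop₁ hTb₁ hlamn hρ₂ hG₁ hG₂ (Or.inl hcmp)⟩
        · rcases le_total k₂ k₁ with hkk | hkk
          · exact Or.inr ⟨‖lam‖, hlamn, k₁,
              combine_good g hsum _ hgn1 hCop₁ hTb₁ hlamn hρ₂ hG₁ hG₂ (Or.inr ⟨hcmp, hkk⟩)⟩
          · exact Or.inr ⟨ρ₂, hρ₂, k₂,
              combine_good g (by rw [hsum, add_comm]) _ hgn2 hCop₂ hTb₂ hρ₂ hlamn hG₂ hG₁
                (Or.inr ⟨hcmp.symm, hkk⟩)⟩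
        · exact Or.inr ⟨ρ₂, hρ₂, k₂,
            combine_good g (by rw [hsum, add_comm]) _ hgn2 hCop₂ hTb₂ hρ₂ hlamn hG₂ hG₁
              (Or.inl hcmp)⟩



/-- Brouwer fixed point argument for a linear map preserving a cone over a
compact convex base: if `K ⊆ ℝ^m` is a nonempty compact convex set not containing `0`,
`C` is the cone over `K`, every nonzero element of `C` has a unique representation
`t • x` with `t > 0`, `x ∈ K`, and `f` is a linear map with `f(C) ⊆ C` vanishing
nowhere on `C \ {0}`, then `f` has an eigenvector in `K` with positive eigenvalue. -/
theorem stmt0 (m : ℕ) (hm : 1 ≤ m) (K : Set (Fin m → ℝ))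
    (hKne : K.Nonempty) (hKcomp : IsCompact K) (hKconv : Convex ℝ K)
    (h0K : (0 : Fin m → ℝ) ∉ K)
    (C : Set (Fin m → ℝ))
    (hC : C = {y | ∃ t : ℝ, 0 ≤ t ∧ ∃ x ∈ K, y = t • x})
    (huniq : ∀ y ∈ C, y ≠ 0 →
      ∃! p : ℝ × (Fin m → ℝ), 0 < p.1 ∧ p.2 ∈ K ∧ y = p.1 • p.2)
    (f : (Fin m → ℝ) →ₗ[ℝ] (Fin m → ℝ))
    (hfC : ∀ y ∈ C, f y ∈ C)
    (hfne : ∀ y ∈ C, y ≠ 0 → f y ≠ 0) :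
    ∃ x ∈ K, ∃ lam : ℝ, 0 < lam ∧ f x = lam • x := by
  classical
  subst hC
  obtain ⟨u, huK⟩ := hKne
  have hu0 : u ≠ 0 := fun h => h0K (h ▸ huK)
  set Cn : Set (Fin m → ℝ) := {y | ∃ t : ℝ, 0 ≤ t ∧ ∃ x ∈ K, y = t • x} with hCn
  have hKsub : ∀ x ∈ K, x ∈ Cn := fun x hx => ⟨1, zero_le_one, x, hx, (one_smul _ _).symm⟩
  have hsmulC : ∀ (s : ℝ), 0 ≤ s → ∀ y ∈ Cn, s • y ∈ Cn := by
    rintro s hs y ⟨t, ht, x, hx, rfl⟩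
    exact ⟨s * t, mul_nonneg hs ht, x, hx, smul_smul s t x⟩
  have haddC : ∀ y₁ ∈ Cn, ∀ y₂ ∈ Cn, y₁ + y₂ ∈ Cn := by
    rintro _ ⟨t₁, ht₁, x₁, hx₁, rfl⟩ _ ⟨t₂, ht₂, x₂, hx₂, rfl⟩
    rcases eq_or_lt_of_le (add_nonneg ht₁ ht₂ : (0:ℝ) ≤ t₁ + t₂) with hT | hT
    · have h1 : t₁ = 0 := by linarith
      have h2 : t₂ = 0 := by linarith
      exact ⟨0, le_rfl, x₁, hx₁, by simp [h1, h2]⟩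
    · refine ⟨t₁ + t₂, hT.le, (t₁ / (t₁ + t₂)) • x₁ + (t₂ / (t₁ + t₂)) • x₂,
        hKconv hx₁ hx₂ (by positivity) (by positivity) (by field_simp), ?_⟩
      rw [smul_add, smul_smul, smul_smul]
      congr 1 <;> rw [mul_div_cancel₀] <;> exact ne_of_gt hT
  have h0C : (0 : Fin m → ℝ) ∈ Cn := ⟨0, le_rfl, u, huK, by simp⟩
  -- separating functional
  obtain ⟨φ, v', hφ0, hφK⟩ := geometric_hahn_banach_point_closed hKconv hKcomp.isClosed h0K
  have hv' : 0 < v' := by simpa using hφ0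
  -- Δ, δ
  obtain ⟨Δ, hΔpos, hΔ⟩ : ∃ Δ : ℝ, 0 < Δ ∧ ∀ x ∈ K, ‖x‖ ≤ Δ := by
    obtain ⟨x₀, hx₀K, hmax⟩ := hKcomp.exists_isMaxOn ⟨u, huK⟩ continuous_norm.continuousOn
    refine ⟨‖x₀‖ + 1, by positivity, fun x hx => ?_⟩
    have := hmax hx
    simp only [Set.mem_setOf_eq] at this
    linarith
  obtain ⟨δ, hδpos, hδ⟩ : ∃ δ : ℝ, 0 < δ ∧ ∀ x ∈ K, δ ≤ ‖x‖ := by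
    obtain ⟨x₀, hx₀K, hmin⟩ := hKcomp.exists_isMinOn ⟨u, huK⟩ continuous_norm.continuousOn
    refine ⟨‖x₀‖, norm_pos_iff.2 (fun h => h0K (h ▸ hx₀K)), fun x hx => hmin hx⟩
  -- φ vs norm on the cone
  have hφC : ∀ y ∈ Cn, (v' / Δ) * ‖y‖ ≤ φ y := by
    rintro _ ⟨t, ht, x, hx, rfl⟩
    have h1 : ‖t • x‖ = t * ‖x‖ := by rw [norm_smul, Real.norm_of_nonneg ht]
    have h2 := hφK x hx
    have h3 := hΔ x hx
    have h4 : φ (t • x) = t * φ x := by rw [map_smul, smul_eq_mul]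
    rw [h1, h4]
    have h5 : v' / Δ * ‖x‖ ≤ v' := by
      rw [div_mul_eq_mul_div, div_le_iff₀ hΔpos]
      nlinarith [norm_nonneg x]
    calc v' / Δ * (t * ‖x‖) = t * (v' / Δ * ‖x‖) := by ring
    _ ≤ t * v' := mul_le_mul_of_nonneg_left h5 ht
    _ ≤ t * φ x := mul_le_mul_of_nonneg_left h2.le ht
  have hφnonneg : ∀ y ∈ Cn, 0 ≤ φ y := fun y hy => le_trans (by positivity) (hφC y hy)
  -- iterates stay in the cone
  have hfn : ∀ n : ℕ, (f ^ n) u ∈ Cn ∧ (f ^ n) u ≠ 0 := by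
    intro n
    induction n with
    | zero => exact ⟨by simpa using hKsub u huK, by simpa using hu0⟩
    | succ n ihn =>
      have h1 : (f ^ (n + 1)) u = f ((f ^ n) u) := by rw [pow_succ', Module.End.mul_apply]
      rw [h1]
      exact ⟨hfC _ ihn.1, hfne _ ihn.1 ihn.2⟩
  -- complexification
  set Mc := (LinearMap.toMatrix' f).map (algebraMap ℝ ℂ) with hMc
  set g : (Fin m → ℂ) →ₗ[ℂ] (Fin m → ℂ) := Mc.mulVecLin with hgdef
  set jm : (Fin m → ℝ) → (Fin m → ℂ) := fun x i => ((x i : ℝ) : ℂ) with hjm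
  have hjf : ∀ x, g (jm x) = jm (f x) := by
    intro x
    funext i
    have hfx : f x = (LinearMap.toMatrix' f).mulVec x := by
      conv_lhs => rw [← Matrix.toLin'_toMatrix' f]
      rw [Matrix.toLin'_apply]
    rw [hgdef, Matrix.mulVecLin_apply]
    simp only [hjm, hfx, Matrix.mulVec, dotProduct, hMc, Matrix.map_apply]
    push_cast
    rfl
  have hjadd : ∀ x y, jm (x + y) = jm x + jm y := by
    intro x y; funext i; simp [hjm]
  have hjn : ∀ n : ℕ, (g ^ n) (jm u) = jm ((f ^ n) u) := by
    intro n
    induction n with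
    | zero => simp
    | succ n ihn =>
      calc (g ^ (n + 1)) (jm u) = g ((g ^ n) (jm u)) := by rw [pow_succ', Module.End.mul_apply]
      _ = g (jm ((f ^ n) u)) := by rw [ihn]
      _ = jm (f ((f ^ n) u)) := hjf _
      _ = jm ((f ^ (n + 1)) u) := by rw [pow_succ', Module.End.mul_apply]
  have hjnorm : ∀ x, ‖jm x‖ = ‖x‖ := by
    intro x
    rw [Pi.norm_def, Pi.norm_def]
    congr 1
    apply Finset.sup_congr rfl
    intro i _
    apply NNReal.coe_injective
    simp [hjm, coe_nnnorm, Complex.norm_real]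
  -- spectral asymptotics
  have hspec := spectral_asymp g (g.charpoly.natDegree) g.charpoly (LinearMap.charpoly_monic g)
    le_rfl (jm u) (by rw [LinearMap.aeval_self_charpoly]; rfl)
  rcases hspec with ⟨N, hN⟩ | ⟨ρ, hρpos, k, c, Ca, hc, n₀, hbounds⟩
  · exfalso
    rw [hjn] at hN
    apply (hfn N).2
    funext i
    have := congrFun hN i
    simpa [hjm, Complex.ofReal_eq_zero] using this
  have hfb : ∀ n, n₀ ≤ n → c * (ρ ^ n * ((n:ℝ) + 1) ^ k) ≤ ‖(f ^ n) u‖ ∧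
      ‖(f ^ n) u‖ ≤ Ca * (ρ ^ n * ((n:ℝ) + 1) ^ k) := by
    intro n hn
    have := hbounds n hn
    rwa [hjn, hjnorm] at this
  -- normalized sequence
  set d : ℕ → ℝ := fun n => ρ ^ n * ((n:ℝ) + 1) ^ k with hd
  have hdpos : ∀ n, 0 < d n := fun n => by positivity
  set v : ℕ → (Fin m → ℝ) := fun n => (d n)⁻¹ • (f ^ n) u with hv
  have hvC : ∀ n, v n ∈ Cn := fun n => hsmulC _ (inv_nonneg.2 (hdpos n).le) _ (hfn n).1
  have hvnorm : ∀ n, n₀ ≤ n → c ≤ ‖v n‖ ∧ ‖v n‖ ≤ Ca := by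
    intro n hn
    obtain ⟨h1, h2⟩ := hfb n hn
    have hdn := hdpos n
    have h3 : ‖v n‖ = ‖(f ^ n) u‖ / d n := by
      rw [hv]
      simp only
      rw [norm_smul, Real.norm_of_nonneg (by positivity : (0:ℝ) ≤ (d n)⁻¹)]
      rw [inv_mul_eq_div]
    constructor
    · rw [h3, le_div_iff₀ hdn]; exact h1
    · rw [h3, div_le_iff₀ hdn]; exact h2
  have hCa0 : 0 < Ca := by
    have := hvnorm n₀ le_rfl
    linarith [norm_nonneg (v n₀)]
  set Cb := Ca + ∑ i ∈ Finset.range n₀, ‖v i‖ with hCb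
  have hsumnn : 0 ≤ ∑ i ∈ Finset.range n₀, ‖v i‖ :=
    Finset.sum_nonneg fun i _ => norm_nonneg _
  have hCbpos : 0 < Cb := by rw [hCb]; linarith
  have hvb : ∀ n, ‖v n‖ ≤ Cb := by
    intro n
    rcases lt_or_ge n n₀ with h | h
    · have h1 : ‖v n‖ ≤ ∑ i ∈ Finset.range n₀, ‖v i‖ :=
        Finset.single_le_sum (fun i _ => norm_nonneg (v i)) (Finset.mem_range.2 h)
      rw [hCb]; linarith
    · rw [hCb]; linarith [(hvnorm n h).2]
  -- Cesàro averages
  set z : ℕ → (Fin m → ℝ) := fun N => ((N:ℝ))⁻¹ • ∑ n ∈ Finset.range N, v n with hz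
  have hzC : ∀ N, z N ∈ Cn := by
    intro N
    apply hsmulC _ (by positivity)
    exact Finset.sum_induction v (· ∈ Cn) (fun a b ha hb => haddC a ha b hb) h0C
      (fun i _ => hvC i)
  have hznorm : ∀ N, ‖z N‖ ≤ Cb := by
    intro N
    rcases Nat.eq_zero_or_pos N with h | h
    · subst h; simp [hz]; positivity
    have hN0 : (0:ℝ) < (N:ℝ) := by exact_mod_cast h
    rw [hz]
    simp only
    rw [norm_smul, Real.norm_of_nonneg (by positivity : (0:ℝ) ≤ ((N:ℝ))⁻¹)]
    have h1 : ‖∑ n ∈ Finset.range N, v n‖ ≤ (N:ℝ) * Cb := by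
      calc ‖∑ n ∈ Finset.range N, v n‖ ≤ ∑ n ∈ Finset.range N, ‖v n‖ := norm_sum_le _ _
      _ ≤ ∑ _n ∈ Finset.range N, Cb := Finset.sum_le_sum fun i _ => hvb i
      _ = (N:ℝ) * Cb := by rw [Finset.sum_const, Finset.card_range, nsmul_eq_mul]
    calc ((N:ℝ))⁻¹ * ‖∑ n ∈ Finset.range N, v n‖ ≤ ((N:ℝ))⁻¹ * ((N:ℝ) * Cb) :=
          mul_le_mul_of_nonneg_left h1 (by positivity)
    _ = Cb := by field_simp
  set γ : ℝ := (v' / Δ) * c with hγ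
  have hγpos : 0 < γ := by rw [hγ]; positivity
  have hφv : ∀ n, n₀ ≤ n → γ ≤ φ (v n) := by
    intro n hn
    have h1 := (hvnorm n hn).1
    have h2 := hφC (v n) (hvC n)
    have h3 : 0 ≤ v' / Δ := by positivity
    calc γ = v' / Δ * c := hγ
    _ ≤ v' / Δ * ‖v n‖ := mul_le_mul_of_nonneg_left h1 h3
    _ ≤ φ (v n) := h2
  have hφz : ∀ N, 2 * n₀ + 1 ≤ N → γ / 2 ≤ φ (z N) := by
    intro N hN
    have hN0 : (0:ℝ) < (N:ℝ) := by
      have : 0 < N := by omega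
      exact_mod_cast this
    rw [hz]
    simp only [map_smul, smul_eq_mul, map_sum]
    have h1 : ((N - n₀ : ℕ):ℝ) * γ ≤ ∑ n ∈ Finset.range N, φ (v n) := by
      have h2 : ∑ n ∈ Finset.Ico n₀ N, φ (v n) ≤ ∑ n ∈ Finset.range N, φ (v n) := by
        rw [Finset.range_eq_Ico]
        apply Finset.sum_le_sum_of_subset_of_nonneg (Finset.Ico_subset_Ico (Nat.zero_le _) le_rfl)
        intro i hi _
        exact hφnonneg _ (hvC i)
      have h3 : ((N - n₀ : ℕ):ℝ) * γ ≤ ∑ n ∈ Finset.Ico n₀ N, φ (v n) := by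
        have h4 := Finset.card_nsmul_le_sum (Finset.Ico n₀ N) (fun n => φ (v n)) γ
          (fun i hi => hφv i (Finset.mem_Ico.1 hi).1)
        rwa [Nat.card_Ico, nsmul_eq_mul] at h4
      linarith
    have h5 : (N:ℝ) / 2 ≤ ((N - n₀ : ℕ):ℝ) := by
      have h6 : N ≤ 2 * (N - n₀) := by omega
      have h7 : (N:ℝ) ≤ 2 * ((N - n₀ : ℕ):ℝ) := by exact_mod_cast h6
      linarith
    calc γ / 2 = ((N:ℝ))⁻¹ * (((N:ℝ) / 2) * γ) := by field_simp
    _ ≤ ((N:ℝ))⁻¹ * (((N - n₀ : ℕ):ℝ) * γ) := by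
        apply mul_le_mul_of_nonneg_left _ (by positivity)
        exact mul_le_mul_of_nonneg_right h5 hγpos.le
    _ ≤ ((N:ℝ))⁻¹ * ∑ n ∈ Finset.range N, φ (v n) :=
        mul_le_mul_of_nonneg_left h1 (by positivity)
  -- the approximate eigenvector equation
  set r : ℕ → ℝ := fun n => ρ * (((n:ℝ) + 2) / ((n:ℝ) + 1)) ^ k with hr
  have hfv : ∀ n, f (v n) = r n • v (n + 1) := by
    intro n
    rw [hv]
    simp only [map_smul]
    have h1 : f ((f ^ n) u) = (f ^ (n + 1)) u := by rw [pow_succ', Module.End.mul_apply]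
    rw [h1, smul_smul]
    congr 1
    show (d n)⁻¹ = r n * (d (n + 1))⁻¹
    have hn1 : ((n:ℝ) + 1) ≠ 0 := by positivity
    have hρn : ρ ^ (n + 1) ≠ 0 := by positivity
    have hn2' : ((n:ℝ) + 2) ≠ 0 := by positivity
    have hn2 : ((n + 1 : ℕ):ℝ) + 1 = (n:ℝ) + 2 := by push_cast; ring
    have e1 : d n = ρ ^ n * ((n:ℝ) + 1) ^ k := rfl
    have e2 : d (n + 1) = ρ ^ (n + 1) * ((n:ℝ) + 2) ^ k := by
      rw [show d (n + 1) = ρ ^ (n + 1) * (((n + 1 : ℕ):ℝ) + 1) ^ k from rfl, hn2]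
    have e3 : r n = ρ * (((n:ℝ) + 2) / ((n:ℝ) + 1)) ^ k := rfl
    rw [e1, e2, e3, div_pow]
    field_simp
    ring
  have hkey : ∀ N : ℕ, f (z N) - ρ • z N =
      ((N:ℝ))⁻¹ • (∑ n ∈ Finset.range N, (r n - ρ) • v (n + 1))
      + (((N:ℝ))⁻¹ * ρ) • (v N - v 0) := by
    intro N
    have hz1 : z N = ((N:ℝ))⁻¹ • ∑ n ∈ Finset.range N, v n := rfl
    have h2 : f (z N) = ((N:ℝ))⁻¹ • ∑ n ∈ Finset.range N, f (v n) := by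
      rw [hz1, map_smul, map_sum]
    have h1 : ∑ n ∈ Finset.range N, f (v n)
        = (∑ n ∈ Finset.range N, (r n - ρ) • v (n + 1)) + (ρ • (v N - v 0)
          + ρ • ∑ n ∈ Finset.range N, v n) := by
      rw [← Finset.sum_range_sub v N, Finset.smul_sum, Finset.smul_sum, ← Finset.sum_add_distrib,
        ← Finset.sum_add_distrib]
      refine Finset.sum_congr rfl fun n _ => ?_
      rw [hfv n, sub_smul, smul_sub]
      abel
    rw [h2, h1, hz1]
    module
  have hub : ∀ N : ℕ, ‖f (z N) - ρ • z N‖ ≤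
      ((N:ℝ))⁻¹ * (∑ n ∈ Finset.range N, |r n - ρ| * Cb) + ((N:ℝ))⁻¹ * (ρ * (2 * Cb)) := by
    intro N
    rw [hkey N]
    have hNnn : (0:ℝ) ≤ ((N:ℝ))⁻¹ := by positivity
    calc ‖((N:ℝ))⁻¹ • (∑ n ∈ Finset.range N, (r n - ρ) • v (n + 1))
        + (((N:ℝ))⁻¹ * ρ) • (v N - v 0)‖
        ≤ ‖((N:ℝ))⁻¹ • (∑ n ∈ Finset.range N, (r n - ρ) • v (n + 1))‖
          + ‖(((N:ℝ))⁻¹ * ρ) • (v N - v 0)‖ := norm_add_le _ _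
    _ ≤ ((N:ℝ))⁻¹ * (∑ n ∈ Finset.range N, |r n - ρ| * Cb) + ((N:ℝ))⁻¹ * (ρ * (2 * Cb)) := by
        apply add_le_add
        · rw [norm_smul, Real.norm_of_nonneg hNnn]
          apply mul_le_mul_of_nonneg_left _ hNnn
          calc ‖∑ n ∈ Finset.range N, (r n - ρ) • v (n + 1)‖
              ≤ ∑ n ∈ Finset.range N, ‖(r n - ρ) • v (n + 1)‖ := norm_sum_le _ _
          _ ≤ ∑ n ∈ Finset.range N, |r n - ρ| * Cb := by
              refine Finset.sum_le_sum fun n _ => ?_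
              rw [norm_smul, Real.norm_eq_abs]
              exact mul_le_mul_of_nonneg_left (hvb (n + 1)) (abs_nonneg _)
        · rw [norm_smul, Real.norm_of_nonneg (by positivity : (0:ℝ) ≤ ((N:ℝ))⁻¹ * ρ), mul_assoc]
          apply mul_le_mul_of_nonneg_left _ hNnn
          apply mul_le_mul_of_nonneg_left _ hρpos.le
          calc ‖v N - v 0‖ ≤ ‖v N‖ + ‖v 0‖ := norm_sub_le _ _
          _ ≤ 2 * Cb := by linarith [hvb N, hvb 0]
  have htendr : Tendsto r atTop (𝓝 ρ) := by
    have h1 : Tendsto (fun n : ℕ => ((n:ℝ) + 2) / ((n:ℝ) + 1)) atTop (𝓝 1) := by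
      have h2 : Tendsto (fun n : ℕ => 1 + 1 / ((n:ℝ) + 1)) atTop (𝓝 (1 + 0)) :=
        tendsto_const_nhds.add tendsto_one_div_add_atTop_nhds_zero_nat
      rw [add_zero] at h2
      apply h2.congr
      intro n
      have : ((n:ℝ) + 1) ≠ 0 := by positivity
      field_simp
      ring
    have h3 : Tendsto (fun n : ℕ => (((n:ℝ) + 2) / ((n:ℝ) + 1)) ^ k) atTop (𝓝 1) := by
      have := h1.pow k
      rwa [one_pow] at this
    have h4 := h3.const_mul ρ
    rw [mul_one] at h4
    exact h4
  have htend : Tendsto (fun N => f (z N) - ρ • z N) atTop (𝓝 0) := by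
    apply squeeze_zero_norm hub
    have h1 : Tendsto (fun n => |r n - ρ| * Cb) atTop (𝓝 0) := by
      have h2 : Tendsto (fun n => r n - ρ) atTop (𝓝 0) := by
        have := htendr.sub_const ρ
        rwa [sub_self] at this
      have h3 : Tendsto (fun n => |r n - ρ|) atTop (𝓝 0) := by
        have := h2.abs
        rwa [abs_zero] at this
      have := h3.mul_const Cb
      rwa [zero_mul] at this
    have h2 := h1.cesaro
    have h3 : Tendsto (fun N : ℕ => ((N:ℝ))⁻¹ * (ρ * (2 * Cb))) atTop (𝓝 0) := by
      have := tendsto_inv_atTop_nhds_zero_nat.mul_const (ρ * (2 * Cb))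
      rwa [zero_mul] at this
    have h4 := h2.add h3
    rwa [add_zero] at h4
  -- extraction of representation and compactness
  have hrep : ∀ N : ℕ, ∃ t : ℝ, 0 ≤ t ∧ ∃ x, x ∈ K ∧ z (N + 1) = t • x := by
    intro N
    obtain ⟨t, ht, x, hx, hzx⟩ := hzC (N + 1)
    exact ⟨t, ht, x, hx, hzx⟩
  choose tN htN0 xN hxNK hzNrep using hrep
  set T₀ := Cb / δ with hT₀
  have htb : ∀ N, tN N ≤ T₀ := by
    intro N
    have h1 : tN N * δ ≤ tN N * ‖xN N‖ := mul_le_mul_of_nonneg_left (hδ _ (hxNK N)) (htN0 N)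
    have h2 : tN N * ‖xN N‖ = ‖z (N + 1)‖ := by
      rw [hzNrep N, norm_smul, Real.norm_of_nonneg (htN0 N)]
    rw [hT₀, le_div_iff₀ hδpos]
    have h3 := hznorm (N + 1)
    linarith
  have hpair : ∀ N, (tN N, xN N) ∈ (Set.Icc (0:ℝ) T₀) ×ˢ K :=
    fun N => ⟨⟨htN0 N, htb N⟩, hxNK N⟩
  obtain ⟨⟨t, x⟩, ⟨htI, hxK⟩, ψ, hψmono, hψtend⟩ :=
    (isCompact_Icc.prod hKcomp).tendsto_subseq hpair
  have ht1 : Tendsto (fun j => tN (ψ j)) atTop (𝓝 t) :=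
    ((continuous_fst.tendsto (t, x)).comp hψtend)
  have hx1 : Tendsto (fun j => xN (ψ j)) atTop (𝓝 x) :=
    ((continuous_snd.tendsto (t, x)).comp hψtend)
  have hzt : Tendsto (fun j => z (ψ j + 1)) atTop (𝓝 (t • x)) := by
    have h1 := ht1.smul hx1
    apply h1.congr
    intro j
    rw [hzNrep (ψ j)]
  have hψatTop : Tendsto (fun j => ψ j + 1) atTop atTop :=
    (tendsto_add_atTop_nat 1).comp hψmono.tendsto_atTop
  have hfcont : Continuous f := f.continuous_of_finiteDimensional
  have hfw : f (t • x) = ρ • (t • x) := by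
    have h1 : Tendsto (fun j => f (z (ψ j + 1))) atTop (𝓝 (f (t • x))) :=
      (hfcont.tendsto (t • x)).comp hzt
    have h2 : Tendsto (fun j => ρ • z (ψ j + 1)) atTop (𝓝 (ρ • (t • x))) := hzt.const_smul ρ
    have h3 := h1.sub h2
    have h4 : Tendsto (fun j => f (z (ψ j + 1)) - ρ • z (ψ j + 1)) atTop (𝓝 0) :=
      htend.comp hψatTop
    have h5 := tendsto_nhds_unique h3 h4
    exact sub_eq_zero.1 h5
  have hφw : γ / 2 ≤ φ (t • x) := by
    have h1 : Tendsto (fun j => φ (z (ψ j + 1))) atTop (𝓝 (φ (t • x))) :=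
      (φ.continuous.tendsto (t • x)).comp hzt
    apply ge_of_tendsto h1
    filter_upwards [hψatTop.eventually_ge_atTop (2 * n₀ + 1)] with j hj
    exact hφz _ hj
  have ht0 : 0 < t := by
    rcases eq_or_lt_of_le htI.1 with h | h
    · exfalso
      have h' : t = 0 := by simpa using h.symm
      rw [h', zero_smul, map_zero] at hφw
      linarith
    · exact h
  refine ⟨x, hxK, ρ, hρpos, ?_⟩
  have h1 : t • f x = t • (ρ • x) := by
    have h2 : f (t • x) = t • f x := map_smul f t x
    have h3 : ρ • (t • x) = t • (ρ • x) := smul_comm ρ t x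
    rw [← h2, ← h3, hfw]
  exact smul_right_injective _ (ne_of_gt ht0) h1

end
end

section
/- Let m ≥ 1 and let the index set {1,…,m} be partitioned into two disjoint sets I₀ and J with I₀ of cardinality at least 2. Let A be an m×m real matrix with nonnegative entries such that: A_{ij} ≥ 1 for all i, j ∈ I₀; A_{ij} equals 1 if i = j and 0 otherwise whenever i ∈ J and j ∈ J; and A_{ij} = 0 whenever exactly one of i, j lies in I₀. Let a ∈ (0, 1/2), let ε > 0, and let v ∈ ℝ^m be a vector with all coordinates nonnegative such that Σ_{i∈I₀} v_i ≥ 2a and Σ_{j∈J} v_j ≤ 1 − 2a. Then for every integer k with k ≥ (log(2(1−a)) − log(aε))/log 2 one has Σ_{i∈I₀} (A^k v)_i ≥ (1/ε) · Σ_{j∈J} (A^k v)_j. -/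
/-- Explicit threshold deduction in the proof of Lemma 6.4: for the block diagonal
matrix `A` as above and a nonnegative vector `v` with mass at least `2a` on the
`I₀`-coordinates and at most `1 - 2a` on the `J`-coordinates, iterating `A` at least
`(log(2(1-a)) - log(aε))/log 2` times makes the mass on the `I₀`-coordinates exceed
`1/ε` times the mass on the `J`-coordinates. -/
theorem stmt7 (m : ℕ) (hm : 1 ≤ m) (I0 J : Finset (Fin m))
    (hdisj : Disjoint I0 J) (hcover : I0 ∪ J = Finset.univ)
    (hcard : 2 ≤ I0.card)
    (A : Matrix (Fin m) (Fin m) ℝ)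
    (hAnn : ∀ i j, 0 ≤ A i j)
    (hA00 : ∀ i ∈ I0, ∀ j ∈ I0, 1 ≤ A i j)
    (hAJJ : ∀ i ∈ J, ∀ j ∈ J, A i j = if i = j then 1 else 0)
    (hAoff : ∀ i j, ((i ∈ I0 ∧ j ∈ J) ∨ (i ∈ J ∧ j ∈ I0)) → A i j = 0)
    (a : ℝ) (ha0 : 0 < a) (ha : a < 1 / 2)
    (ε : ℝ) (hε : 0 < ε)
    (v : Fin m → ℝ) (hv : ∀ i, 0 ≤ v i)
    (hvI0 : 2 * a ≤ ∑ i ∈ I0, v i)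
    (hvJ : ∑ j ∈ J, v j ≤ 1 - 2 * a)
    (k : ℕ)
    (hk : (Real.log (2 * (1 - a)) - Real.log (a * ε)) / Real.log 2 ≤ (k : ℝ)) :
    (1 / ε) * ∑ j ∈ J, (A ^ k).mulVec v j ≤ ∑ i ∈ I0, (A ^ k).mulVec v i := by
  have huniv : (Finset.univ : Finset (Fin m)) = I0 ∪ J := hcover.symm
  -- Main induction: properties of w = (A^n).mulVec v
  have key : ∀ n : ℕ, (∀ i, 0 ≤ (A ^ n).mulVec v i) ∧
      (2 : ℝ) ^ n * (2 * a) ≤ ∑ i ∈ I0, (A ^ n).mulVec v i ∧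
      ∑ j ∈ J, (A ^ n).mulVec v j = ∑ j ∈ J, v j := by
    intro n
    induction n with
    | zero =>
      exact ⟨fun i => by simpa using hv i, by simpa using hvI0, by simp⟩
    | succ n ih =>
      obtain ⟨hnn, hI, hJeq⟩ := ih
      set w := (A ^ n).mulVec v with hw
      have hstep : (A ^ (n + 1)).mulVec v = A.mulVec w := by
        rw [pow_succ', ← Matrix.mulVec_mulVec]
      have hmv : ∀ i, A.mulVec w i = ∑ j, A i j * w j := by
        intro i
        simp [Matrix.mulVec, dotProduct]
      refine ⟨?_, ?_, ?_⟩
      · intro i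
        rw [hstep, hmv]
        exact Finset.sum_nonneg fun j _ => mul_nonneg (hAnn i j) (hnn j)
      · rw [hstep]
        have h1 : ∀ i ∈ I0, ∑ j ∈ I0, w j ≤ A.mulVec w i := by
          intro i hi
          rw [hmv, huniv, Finset.sum_union hdisj]
          have h2 : ∑ j ∈ I0, w j ≤ ∑ j ∈ I0, A i j * w j := by
            refine Finset.sum_le_sum fun j hj => ?_
            nlinarith [hA00 i hi j hj, hnn j]
          have h3 : (0:ℝ) ≤ ∑ j ∈ J, A i j * w j :=
            Finset.sum_nonneg fun j _ => mul_nonneg (hAnn i j) (hnn j)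
          linarith
        have h4 : (I0.card : ℝ) * (∑ j ∈ I0, w j) ≤ ∑ i ∈ I0, A.mulVec w i := by
          calc (I0.card : ℝ) * (∑ j ∈ I0, w j) = ∑ _i ∈ I0, ∑ j ∈ I0, w j := by
                rw [Finset.sum_const, nsmul_eq_mul]
            _ ≤ ∑ i ∈ I0, A.mulVec w i := Finset.sum_le_sum h1
        have hSnn : 0 ≤ ∑ j ∈ I0, w j := Finset.sum_nonneg fun j _ => hnn j
        have hc2 : (2:ℝ) ≤ (I0.card : ℝ) := by exact_mod_cast hcard
        have h5 : (2:ℝ) * (∑ j ∈ I0, w j) ≤ (I0.card : ℝ) * (∑ j ∈ I0, w j) :=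
          mul_le_mul_of_nonneg_right hc2 hSnn
        have h6 : (2:ℝ) ^ (n+1) * (2 * a) ≤ 2 * (∑ j ∈ I0, w j) := by
          rw [pow_succ]
          nlinarith
        linarith
      · rw [hstep]
        have hfix : ∀ j ∈ J, A.mulVec w j = w j := by
          intro j hj
          rw [hmv, huniv, Finset.sum_union hdisj]
          have h0 : ∑ l ∈ I0, A j l * w l = 0 :=
            Finset.sum_eq_zero fun l hl => by
              rw [hAoff j l (Or.inr ⟨hj, hl⟩), zero_mul]
          rw [h0, zero_add,
            Finset.sum_congr rfl fun l hl => by rw [hAJJ j hj l hl]]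
          simp [hj]
        rw [Finset.sum_congr rfl hfix, hJeq]
  obtain ⟨hnn, hI, hJeq⟩ := key k
  -- From hk deduce 2^k ≥ 2(1-a)/(aε)
  have h1a : (0:ℝ) < 1 - a := by linarith
  have haε : (0:ℝ) < a * ε := mul_pos ha0 hε
  have hnum : (0:ℝ) < 2 * (1 - a) := by linarith
  have hlog2 : (0:ℝ) < Real.log 2 := Real.log_pos (by norm_num)
  have hklog : Real.log (2 * (1 - a)) - Real.log (a * ε) ≤ (k : ℝ) * Real.log 2 := by
    have := (div_le_iff₀ hlog2).mp hk
    linarith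
  have hlogdiv : Real.log (2 * (1 - a) / (a * ε)) ≤ Real.log ((2:ℝ) ^ k) := by
    rw [Real.log_div hnum.ne' haε.ne', Real.log_pow]
    linarith
  have h2k : 2 * (1 - a) / (a * ε) ≤ (2:ℝ) ^ k :=
    (Real.log_le_log_iff (div_pos hnum haε) (by positivity)).mp hlogdiv
  have hJv : ∑ j ∈ J, (A ^ k).mulVec v j ≤ 1 - 2 * a := by rw [hJeq]; exact hvJ
  have h2ka : (2 * (1 - a) / (a * ε)) * (2 * a) ≤ (2:ℝ) ^ k * (2 * a) :=
    mul_le_mul_of_nonneg_right h2k (by linarith)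
  have heq : (2 * (1 - a) / (a * ε)) * (2 * a) = 4 * (1 - a) / ε := by
    field_simp; ring
  rw [heq] at h2ka
  have hfin : (1 / ε) * (1 - 2 * a) ≤ 4 * (1 - a) / ε := by
    have h3 : (0:ℝ) < 1 / ε := by positivity
    have h4 : 4 * (1 - a) / ε = (1 / ε) * (4 * (1 - a)) := by ring
    rw [h4]
    nlinarith
  have : (1 / ε) * ∑ j ∈ J, (A ^ k).mulVec v j ≤ (1 / ε) * (1 - 2 * a) :=
    mul_le_mul_of_nonneg_left hJv (by positivity)
  linarith
end
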